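/- Let A₀, …, A_{r−1} be XP operators of precision N with binary x-components, let S_Z be a set of diagonal XP operators of precision N, and let G be the subgroup of the group of invertible 2^n × 2^n complex matrices generated by {A₀, …, A_{r−1}} ∪ S_Z. Let e : Fin n → Fin 2 be a bit string such that B.mulVec |e⟩ = |e⟩ for every diagonal matrix B ∈ G. Then for every v : Fin r → Fin 2 and every diagonal matrix B ∈ G, B.mulVec ((A₀^(v 0) * ⋯ * A_{r−1}^(v (r−1))).mulVec |e⟩) = (A₀^(v 0) * ⋯ * A_{r−1}^(v (r−1))).mulVec |e⟩; that is, the set of basis labels fixed by all diagonal elements of G is closed under adding (mod 2) any sum of the x-components of the A_i. -/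

import Mathlib

open Matrix

/-- `ω = exp(πi/N)`. -/
noncomputable def omN (N : ℕ) : ℂ := Complex.exp (Real.pi * Complex.I / N)

/-- The Pauli X matrix. -/
def Xm : Matrix (Fin 2) (Fin 2) ℂ := !![0, 1; 1, 0]

/-- The precision-`N` phase matrix `P = diag(1, ω²)`. -/
noncomputable def Pm (N : ℕ) : Matrix (Fin 2) (Fin 2) ℂ := !![1, 0; 0, (omN N) ^ 2]

/-- The precision-`N` XP operator `XP_N(p|x|z)` on `n` qubits, the matrix indexed by bit
strings whose `(f, e)` entry is `ω^p * ∏ i, (X^(x i) * P^(z i)) (f i) (e i)`. -/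
noncomputable def XP (N n : ℕ) (p : ℤ) (x z : Fin n → ℤ) :
    Matrix (Fin n → Fin 2) (Fin n → Fin 2) ℂ :=
  Matrix.of fun f e => (omN N) ^ p * ∏ i, ((Xm ^ (x i)) * (Pm N) ^ (z i)) (f i) (e i)

/-- The antisymmetric operator `D_N(z) = XP_N(∑ i, z i | 0 | -z)`. -/
noncomputable def DN (N n : ℕ) (z : Fin n → ℤ) :
    Matrix (Fin n → Fin 2) (Fin n → Fin 2) ℂ :=
  XP N n (∑ i, z i) 0 (-z)

/-- A vector is binary if every entry is 0 or 1. -/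
def IsBinary {n : ℕ} (x : Fin n → ℤ) : Prop := ∀ i, x i = 0 ∨ x i = 1

/-!
An XP operator with binary `x`-part is monomial: a permutation matrix times an invertible
diagonal matrix. Conjugation by a monomial matrix keeps diagonal matrices diagonal, so for
`m = ∏ A_i^{v_i}` and a diagonal `g ∈ G`, the element `m⁻¹ g m` of `G` is diagonal and fixes
`|e⟩`; hence `g (m |e⟩) = m |e⟩`.
-/

namespace Matrix

variable {ι R : Type*} [Fintype ι] [DecidableEq ι]

def diagNormalizer (R : Type*) [CommSemiring R] : Submonoid (Matrix ι ι R) where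
  carrier := {M | ∀ B : Matrix ι ι R, B.IsDiag → ∃ C : Matrix ι ι R, C.IsDiag ∧ B * M = M * C}
  one_mem' B hB := ⟨B, hB, by rw [one_mul, mul_one]⟩
  mul_mem' {M M'} hM hM' B hB := by
    obtain ⟨C, hC, hBC⟩ := hM B hB
    obtain ⟨C', hC', hCC'⟩ := hM' C hC
    exact ⟨C', hC', by rw [← mul_assoc, hBC, mul_assoc, hCC', mul_assoc]⟩

variable [CommSemiring R]

theorem diagonal_mem_diagNormalizer (d : ι → R) : diagonal d ∈ diagNormalizer R := by
  intro B hB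
  refine ⟨B, hB, ?_⟩
  rw [← hB.diagonal_diag, diagonal_mul_diagonal, diagonal_mul_diagonal]
  simp only [mul_comm]

theorem permMatrix_mem_diagNormalizer (σ : Equiv.Perm ι) :
    σ.permMatrix R ∈ diagNormalizer R := by
  intro B hB
  refine ⟨B.submatrix σ.symm σ.symm, hB.submatrix σ.symm.injective, ?_⟩
  rw [PEquiv.toMatrix_toPEquiv_mul, ← hB.diagonal_diag, PEquiv.mul_toMatrix_toPEquiv]
  ext i j
  simp [diagonal_apply, Equiv.eq_symm_apply]

theorem IsDiag.units_inv_mul_mul {u : (Matrix ι ι R)ˣ}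
    (hu : (u : Matrix ι ι R) ∈ diagNormalizer R) {B : Matrix ι ι R} (hB : B.IsDiag) :
    (((u⁻¹ : (Matrix ι ι R)ˣ) : Matrix ι ι R) * B * u).IsDiag := by
  obtain ⟨C, hC, hBC⟩ := hu B hB
  rwa [mul_assoc, hBC, Units.inv_mul_cancel_left]

theorem isUnit_permMatrix (σ : Equiv.Perm ι) : IsUnit (σ.permMatrix R) :=
  ⟨⟨σ.permMatrix R, σ⁻¹.permMatrix R,
    by rw [← permMatrix_mul, inv_mul_cancel, permMatrix_one],
    by rw [← permMatrix_mul, mul_inv_cancel, permMatrix_one]⟩, rfl⟩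

theorem diagonal_zpow {K : Type*} [Field K] {d : ι → K} (hd : ∀ i, d i ≠ 0) (z : ℤ) :
    diagonal d ^ z = diagonal (d ^ z) := by
  rcases z with k | k
  · simp [diagonal_pow]
  · rw [zpow_negSucc, diagonal_pow]
    refine inv_eq_left_inv ?_
    rw [diagonal_mul_diagonal, ← diagonal_one]
    congr 1
    ext i
    simp [zpow_negSucc, hd i]

theorem of_mul_prod_permMatrix_mul_diagonal {α : Type*} [Fintype α] [DecidableEq α] (c : R)
    (σ : ι → Equiv.Perm α) (d : ι → α → R) :
    Matrix.of (fun f e : ι → α => c * ∏ i, ((σ i).permMatrix R * diagonal (d i)) (f i) (e i)) =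
      Equiv.Perm.permMatrix R (Equiv.piCongrRight σ) * diagonal fun e => c * ∏ i, d i (e i) := by
  ext f e
  simp only [PEquiv.toMatrix_toPEquiv_mul, submatrix_apply, diagonal_apply, of_apply, id,
    Equiv.piCongrRight_apply, Finset.prod_ite_zero, Finset.mem_univ, true_implies, funext_iff]
  split_ifs <;> simp_all

def DiagFixed (G : Subgroup (Matrix ι ι R)ˣ) (s : ι → R) : Prop :=
  ∀ g ∈ G, (g : Matrix ι ι R).IsDiag → (g : Matrix ι ι R) *ᵥ s = s

theorem DiagFixed.mulVec {G : Subgroup (Matrix ι ι R)ˣ} {s : ι → R} (hs : DiagFixed G s)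
    {m : (Matrix ι ι R)ˣ} (hmG : m ∈ G) (hm : (m : Matrix ι ι R) ∈ diagNormalizer R) :
    DiagFixed G ((m : Matrix ι ι R) *ᵥ s) := by
  intro g hg hg_diag
  have hconj : ((m⁻¹ * g * m : (Matrix ι ι R)ˣ) : Matrix ι ι R) *ᵥ s = s :=
    hs _ (mul_mem (mul_mem (inv_mem hmG) hg) hmG) (by simpa using hg_diag.units_inv_mul_mul hm)
  calc (g : Matrix ι ι R) *ᵥ ((m : Matrix ι ι R) *ᵥ s)
      = (m : Matrix ι ι R) *ᵥ (((m⁻¹ * g * m : (Matrix ι ι R)ˣ) : Matrix ι ι R) *ᵥ s) := by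
        simp [mulVec_mulVec, ← mul_assoc]
    _ = (m : Matrix ι ι R) *ᵥ s := by rw [hconj]

end Matrix

theorem omN_ne_zero (N : ℕ) : omN N ≠ 0 := Complex.exp_ne_zero _

theorem Xm_zpow_of_binary {x : ℤ} (hx : x = 0 ∨ x = 1) :
    Xm ^ x = (Equiv.swap 0 1 ^ x).permMatrix ℂ := by
  rcases hx with rfl | rfl
  · simp
  · ext a b
    fin_cases a <;> fin_cases b <;> simp [Xm, PEquiv.toMatrix_apply]

theorem isDiag_Pm (N : ℕ) : (Pm N).IsDiag := by
  intro a b hab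
  fin_cases a <;> fin_cases b <;> simp_all [Pm]

theorem Pm_diag_ne_zero (N : ℕ) (b : Fin 2) : (Pm N).diag b ≠ 0 := by
  fin_cases b <;> simp [Pm, omN_ne_zero]

theorem Pm_zpow (N : ℕ) (z : ℤ) : Pm N ^ z = diagonal ((Pm N).diag ^ z) := by
  rw [← diagonal_zpow (Pm_diag_ne_zero N), (isDiag_Pm N).diagonal_diag]

theorem XP_eq_permMatrix_mul_diagonal {N n : ℕ} (p : ℤ) {x : Fin n → ℤ} (z : Fin n → ℤ)
    (hx : IsBinary x) :
    XP N n p x z = Equiv.Perm.permMatrix ℂ (Equiv.piCongrRight fun i => Equiv.swap 0 1 ^ x i) *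
      diagonal fun e => omN N ^ p * ∏ i, ((Pm N).diag ^ z i) (e i) := by
  rw [← of_mul_prod_permMatrix_mul_diagonal, XP]
  simp only [Xm_zpow_of_binary (hx _), Pm_zpow]

theorem XP_mem_diagNormalizer {N n : ℕ} (p : ℤ) {x : Fin n → ℤ} (z : Fin n → ℤ)
    (hx : IsBinary x) : XP N n p x z ∈ diagNormalizer ℂ := by
  rw [XP_eq_permMatrix_mul_diagonal p z hx]
  exact mul_mem (permMatrix_mem_diagNormalizer _) (diagonal_mem_diagNormalizer _)

theorem isUnit_XP {N n : ℕ} (p : ℤ) {x : Fin n → ℤ} (z : Fin n → ℤ) (hx : IsBinary x) :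
    IsUnit (XP N n p x z) := by
  rw [XP_eq_permMatrix_mul_diagonal p z hx]
  refine (isUnit_permMatrix _).mul (isUnit_diagonal.2 (Pi.isUnit_iff.2 fun e => ?_))
  exact isUnit_iff_ne_zero.2 (mul_ne_zero (zpow_ne_zero _ (omN_ne_zero N))
    (Finset.prod_ne_zero_iff.2 fun i _ => zpow_ne_zero _ (Pm_diag_ne_zero N _)))

theorem orbit_elements_fixed_general (N n r : ℕ)
    (A : Fin r → Matrix (Fin n → Fin 2) (Fin n → Fin 2) ℂ)
    (hA : ∀ i, ∃ p : ℤ, ∃ x z : Fin n → ℤ, IsBinary x ∧ A i = XP N n p x z)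
    (SZ : Set (Matrix (Fin n → Fin 2) (Fin n → Fin 2) ℂ))
    (G : Subgroup (Matrix (Fin n → Fin 2) (Fin n → Fin 2) ℂ)ˣ)
    (hG : G = Subgroup.closure
      {g : (Matrix (Fin n → Fin 2) (Fin n → Fin 2) ℂ)ˣ | (g : Matrix _ _ ℂ) ∈ Set.range A ∪ SZ})
    (e : Fin n → Fin 2)
    (he : ∀ g ∈ G, Matrix.IsDiag ((g : Matrix (Fin n → Fin 2) (Fin n → Fin 2) ℂ)) →
      ((g : Matrix (Fin n → Fin 2) (Fin n → Fin 2) ℂ)).mulVec (Pi.single e 1) = Pi.single e 1) :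
    ∀ v : Fin r → Fin 2, ∀ g ∈ G,
      Matrix.IsDiag ((g : Matrix (Fin n → Fin 2) (Fin n → Fin 2) ℂ)) →
      ((g : Matrix (Fin n → Fin 2) (Fin n → Fin 2) ℂ)).mulVec
          (((List.ofFn fun i => A i ^ (v i : ℕ)).prod).mulVec (Pi.single e 1)) =
        ((List.ofFn fun i => A i ^ (v i : ℕ)).prod).mulVec (Pi.single e 1) := by
  have hA_units : ∀ i, ∃ u : (Matrix (Fin n → Fin 2) (Fin n → Fin 2) ℂ)ˣ,
      ↑u = A i ∧ u ∈ G ∧ A i ∈ diagNormalizer ℂ := by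
    intro i
    obtain ⟨p, x, z, hx, hAi⟩ := hA i
    obtain ⟨u, hu⟩ := isUnit_XP (N := N) p z hx
    rw [← hAi] at hu
    refine ⟨u, hu, hG ▸ Subgroup.subset_closure (Or.inl ⟨i, hu.symm⟩), ?_⟩
    exact hAi ▸ XP_mem_diagNormalizer p z hx
  choose u hu_val hu_G hu_norm using hA_units
  intro v
  let m := (List.ofFn fun i => u i ^ (v i : ℕ)).prod
  have hm_val : (m : Matrix _ _ ℂ) = (List.ofFn fun i => A i ^ (v i : ℕ)).prod := by
    rw [← Units.coeHom_apply, map_list_prod, List.map_ofFn]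
    simp [Function.comp_def, hu_val]
  rw [← hm_val]
  refine DiagFixed.mulVec he ?_ ?_
  · exact list_prod_mem (by simpa [List.mem_ofFn] using fun i => pow_mem (hu_G i) _)
  · rw [hm_val]
    exact list_prod_mem (by simpa [List.mem_ofFn] using fun i => pow_mem (hu_norm i) _)

/-- **Closure of the Z-support under the orbit**: if every diagonal element of the group `G`
generated by non-diagonal XP operators `A₀,…,A_{r−1}` and a set `S_Z` of diagonal XP operators
fixes the basis state `|e⟩`, then for every `v` every diagonal element of `G` also fixes
`(∏_i A_i^{v i})|e⟩`. -/
theorem orbit_elements_fixed (N n r : ℕ) (hN : 2 ≤ N) (hn : 1 ≤ n)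
    (A : Fin r → Matrix (Fin n → Fin 2) (Fin n → Fin 2) ℂ)
    (hA : ∀ i, ∃ p : ℤ, ∃ x z : Fin n → ℤ, IsBinary x ∧ A i = XP N n p x z)
    (SZ : Set (Matrix (Fin n → Fin 2) (Fin n → Fin 2) ℂ))
    (hSZ : ∀ B ∈ SZ, ∃ p : ℤ, ∃ z : Fin n → ℤ, B = XP N n p 0 z)
    (G : Subgroup (Matrix (Fin n → Fin 2) (Fin n → Fin 2) ℂ)ˣ)
    (hG : G = Subgroup.closure
      {g : (Matrix (Fin n → Fin 2) (Fin n → Fin 2) ℂ)ˣ | (g : Matrix _ _ ℂ) ∈ Set.range A ∪ SZ})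
    (e : Fin n → Fin 2)
    (he : ∀ g ∈ G, Matrix.IsDiag ((g : Matrix (Fin n → Fin 2) (Fin n → Fin 2) ℂ)) →
      ((g : Matrix (Fin n → Fin 2) (Fin n → Fin 2) ℂ)).mulVec (Pi.single e 1) = Pi.single e 1) :
    ∀ v : Fin r → Fin 2, ∀ g ∈ G,
      Matrix.IsDiag ((g : Matrix (Fin n → Fin 2) (Fin n → Fin 2) ℂ)) →
      ((g : Matrix (Fin n → Fin 2) (Fin n → Fin 2) ℂ)).mulVec
          (((List.ofFn fun i => A i ^ (v i : ℕ)).prod).mulVec (Pi.single e 1)) =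
        ((List.ofFn fun i => A i ^ (v i : ℕ)).prod).mulVec (Pi.single e 1) :=
  orbit_elements_fixed_general N n r A hA SZ G hG e he
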